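/- arXiv:1003.0495 — 3 statements merged into one kernel-verified Lean document; each statement's English description precedes it below -/
import Mathlib

section
/- For all natural numbers a, b and every integer d with a + b + d ≥ 0, the function (ξ,η,ζ) ↦ ξ^a η^b (1−ζ)^d (integer power of (1−ζ), well defined for ζ < 1) is Lebesgue integrable on K̂ and ∫_{K̂} ξ^a η^b (1−ζ)^d d(ξ,η,ζ) = 1/((a+1)(b+1)(a+b+d+3)). -/
/-!
Slicing `K̂` at height `ζ` gives the square `[0, 1 - ζ]²`, so Fubini (integrating out `ξ`, then
`η`, then `ζ`) turns the integral into `∫₀¹ (1 - ζ) ^ (a + b + d + 2) dζ / ((a + 1) (b + 1))`.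
Integrability holds because `ξ, η ≤ 1 - ζ` on `K̂`, so the integrand is bounded by
`(1 - ζ) ^ (a + b + d) ≤ 1`, and `K̂` has finite measure.
-/

open MeasureTheory

noncomputable section

/-- The reference pyramid K̂ ⊂ ℝ³ (coordinates (ξ, η, ζ)). -/
def Khat : Set (ℝ × ℝ × ℝ) :=
  {p | 0 ≤ p.2.2 ∧ p.2.2 ≤ 1 ∧ 0 ≤ p.1 ∧ p.1 ≤ 1 - p.2.2 ∧ 0 ≤ p.2.1 ∧ p.2.1 ≤ 1 - p.2.2}

open Set

section Fiberwise

variable {α β E : Type*} [MeasurableSpace α] [MeasurableSpace β] {μ : Measure α} {ν : Measure β}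
  [NormedAddCommGroup E] [NormedSpace ℝ E] {t : Set β} {s : β → Set α} {f : α × β → E}

lemma integral_indicator_fiber (hS : MeasurableSet {p : α × β | p.2 ∈ t ∧ p.1 ∈ s p.2}) (y : β) :
    ∫ x, {p : α × β | p.2 ∈ t ∧ p.1 ∈ s p.2}.indicator f (x, y) ∂μ =
      t.indicator (fun y => ∫ x in s y, f (x, y) ∂μ) y := by
  by_cases hy : y ∈ t
  · have hsy : s y = (fun x => (x, y)) ⁻¹' {p : α × β | p.2 ∈ t ∧ p.1 ∈ s p.2} := by
      ext x; simp [hy]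
    rw [indicator_of_mem hy, hsy, ← integral_indicator (measurable_prodMk_right hS)]
    exact integral_congr_ae (ae_of_all _ fun x => (indicator_comp_right (fun x => (x, y))).symm)
  · simp [indicator, hy]

variable [SFinite μ] [SFinite ν]

lemma integrableOn_integral_fiber
    (hS : MeasurableSet {p : α × β | p.2 ∈ t ∧ p.1 ∈ s p.2}) (ht : MeasurableSet t)
    (hf : IntegrableOn f {p : α × β | p.2 ∈ t ∧ p.1 ∈ s p.2} (μ.prod ν)) :
    IntegrableOn (fun y => ∫ x in s y, f (x, y) ∂μ) t ν := by
  rw [← integrable_indicator_iff ht]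
  simpa only [integral_indicator_fiber hS] using
    ((integrable_indicator_iff hS).2 hf).integral_prod_right

lemma setIntegral_prod_eq_setIntegral_fiber
    (hS : MeasurableSet {p : α × β | p.2 ∈ t ∧ p.1 ∈ s p.2}) (ht : MeasurableSet t)
    (hf : IntegrableOn f {p : α × β | p.2 ∈ t ∧ p.1 ∈ s p.2} (μ.prod ν)) :
    ∫ p in {p : α × β | p.2 ∈ t ∧ p.1 ∈ s p.2}, f p ∂μ.prod ν =
      ∫ y in t, ∫ x in s y, f (x, y) ∂μ ∂ν := by
  rw [← integral_indicator hS, integral_prod_symm _ ((integrable_indicator_iff hS).2 hf),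
    ← integral_indicator ht]
  simp only [integral_indicator_fiber hS]

end Fiberwise

lemma pow_mul_zpow_le_one {K : Type*} [Field K] [LinearOrder K] [IsStrictOrderedRing K] {u : K}
    (h0 : 0 ≤ u) (h1 : u ≤ 1) {m : ℕ} {d : ℤ} (hmd : 0 ≤ m + d) : u ^ m * u ^ d ≤ 1 := by
  rcases h0.eq_or_lt with rfl | hu
  · rcases Nat.eq_zero_or_pos m with rfl | hm
    · simp only [pow_zero, one_mul, zero_zpow_eq]
      split_ifs <;> norm_num
    · simp [zero_pow hm.ne']
  · rw [← zpow_natCast, ← zpow_add₀ hu.ne']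
    exact zpow_le_one₀ hu h1 hmd

lemma setIntegral_Icc_zero_pow {t : ℝ} (ht : 0 ≤ t) (m : ℕ) :
    ∫ x in Icc 0 t, x ^ m = t ^ (m + 1) / (m + 1) := by
  rw [integral_Icc_eq_integral_Ioc, ← intervalIntegral.integral_of_le ht, integral_pow]
  simp

lemma setIntegral_Icc_zero_one_sub_zpow {k : ℤ} (hk : 0 ≤ k) :
    ∫ z in Icc (0 : ℝ) 1, (1 - z) ^ k = 1 / (k + 1) := by
  rw [integral_Icc_eq_integral_Ioc, ← intervalIntegral.integral_of_le zero_le_one,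
    intervalIntegral.integral_comp_sub_left (fun x => x ^ k), integral_zpow (Or.inl hk)]
  simp [zero_zpow (k + 1) (by omega)]

lemma pow_mul_zpow_of_add_ne_zero {G₀ : Type*} [GroupWithZero G₀] (u : G₀) {m : ℕ} {d : ℤ}
    (h : (m : ℤ) + d ≠ 0) : u ^ m * u ^ d = u ^ ((m : ℤ) + d) := by
  rw [← zpow_natCast, zpow_add' (Or.inr (Or.inl h))]

def triangle : Set (ℝ × ℝ) :=
  {q | q.2 ∈ Icc 0 1 ∧ q.1 ∈ Icc 0 (1 - q.2)}

lemma Khat_eq_setOf_triangle : Khat = {p | p.2 ∈ triangle ∧ p.1 ∈ Icc 0 (1 - p.2.2)} := by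
  ext ⟨x, y, z⟩
  simp only [Khat, triangle, mem_Icc, mem_ofPred_eq]
  tauto

lemma measurableSet_triangle : MeasurableSet triangle := by
  unfold triangle; measurability

lemma measurableSet_Khat : MeasurableSet Khat := by
  rw [Khat_eq_setOf_triangle]; unfold triangle; measurability

lemma Khat_subset_Icc : Khat ⊆ Icc 0 1 := by
  rintro p ⟨h0, h1, hx0, hx1, hy0, hy1⟩
  exact ⟨⟨hx0, hy0, h0⟩, ⟨(by linarith : p.1 ≤ 1), (by linarith : p.2.1 ≤ 1), h1⟩⟩

lemma volume_Khat_lt_top : volume Khat < ⊤ :=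
  (measure_mono Khat_subset_Icc).trans_lt isCompact_Icc.measure_lt_top

lemma norm_monomial_le_one_of_mem_Khat {a b : ℕ} {d : ℤ} (hd : 0 ≤ (a : ℤ) + b + d)
    {p : ℝ × ℝ × ℝ} (hp : p ∈ Khat) : ‖p.1 ^ a * p.2.1 ^ b * (1 - p.2.2) ^ d‖ ≤ 1 := by
  obtain ⟨_, h1, hx0, hx1, hy0, hy1⟩ := hp
  have hz : 0 ≤ 1 - p.2.2 := by linarith
  rw [Real.norm_of_nonneg (by positivity)]
  calc p.1 ^ a * p.2.1 ^ b * (1 - p.2.2) ^ d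
      ≤ (1 - p.2.2) ^ a * (1 - p.2.2) ^ b * (1 - p.2.2) ^ d := by gcongr
    _ = (1 - p.2.2) ^ (a + b) * (1 - p.2.2) ^ d := by rw [pow_add]
    _ ≤ 1 := pow_mul_zpow_le_one hz (by linarith) (by push_cast; omega)

lemma integrableOn_Khat {a b : ℕ} {d : ℤ} (hd : 0 ≤ (a : ℤ) + b + d) :
    IntegrableOn (fun p : ℝ × ℝ × ℝ => p.1 ^ a * p.2.1 ^ b * (1 - p.2.2) ^ d) Khat volume :=
  Measure.integrableOn_of_bounded volume_Khat_lt_top.ne (by fun_prop)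
    ((ae_restrict_iff' measurableSet_Khat).2
      (ae_of_all _ fun _ => norm_monomial_le_one_of_mem_Khat hd))

/-- for a, b ∈ ℕ and d ∈ ℤ with a + b + d ≥ 0, the function
ξ^a η^b (1−ζ)^d is integrable on K̂ with integral 1/((a+1)(b+1)(a+b+d+3)). -/
theorem stmt_2 (a b : ℕ) (d : ℤ) (hd : 0 ≤ (a : ℤ) + b + d) :
    IntegrableOn
      (fun p : ℝ × ℝ × ℝ => p.1 ^ a * p.2.1 ^ b * (1 - p.2.2) ^ d) Khat volume ∧
    ∫ p in Khat, p.1 ^ a * p.2.1 ^ b * (1 - p.2.2) ^ d =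
      1 / (((a : ℝ) + 1) * ((b : ℝ) + 1) * ((a : ℝ) + (b : ℝ) + (d : ℝ) + 3)) := by
  have hf := integrableOn_Khat hd
  refine ⟨hf, ?_⟩
  have hK := measurableSet_Khat
  rw [Khat_eq_setOf_triangle] at hf hK ⊢
  have hξ : EqOn (fun q : ℝ × ℝ => ∫ x in Icc 0 (1 - q.2), x ^ a * q.1 ^ b * (1 - q.2) ^ d)
      (fun q => (1 - q.2) ^ (a + 1) / (a + 1) * q.1 ^ b * (1 - q.2) ^ d) triangle :=
    fun q hq => by
      simp only [integral_mul_const, setIntegral_Icc_zero_pow (sub_nonneg.2 hq.1.2)]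
  have hη : EqOn
      (fun z : ℝ => ∫ y in Icc 0 (1 - z), (1 - z) ^ (a + 1) / (a + 1) * y ^ b * (1 - z) ^ d)
      (fun z => (1 - z) ^ (((a + b + 2 : ℕ) : ℤ) + d) / (a + 1) / (b + 1)) (Icc 0 1) :=
    fun z hz => by
      simp only [integral_mul_const, integral_const_mul,
        setIntegral_Icc_zero_pow (sub_nonneg.2 hz.2)]
      rw [← pow_mul_zpow_of_add_ne_zero _ (by omega)]
      ring
  have hg := (integrableOn_integral_fiber (s := fun q : ℝ × ℝ => Icc 0 (1 - q.2)) hK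
    measurableSet_triangle hf).congr_fun hξ measurableSet_triangle
  rw [Measure.volume_eq_prod, setIntegral_prod_eq_setIntegral_fiber
    (s := fun q : ℝ × ℝ => Icc 0 (1 - q.2)) hK measurableSet_triangle hf,
    setIntegral_congr_fun measurableSet_triangle hξ]
  unfold triangle at hg ⊢
  rw [Measure.volume_eq_prod, setIntegral_prod_eq_setIntegral_fiber
    (s := fun z : ℝ => Icc 0 (1 - z)) measurableSet_triangle measurableSet_Icc hg,
    setIntegral_congr_fun measurableSet_Icc hη, integral_div, integral_div,
    setIntegral_Icc_zero_one_sub_zpow (by omega)]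
  push_cast
  field_simp
  ring
end
end

section
/- Let k ≥ 1 be an integer and let ũ = (ũ₁,ũ₂,ũ₃) be an element of the H(div)-underlying space U^{(2)}_k. Then each of the three functions on K∞ given by (1+z)²·((1+z)·ũ₁ − x·ũ₃), (1+z)²·((1+z)·ũ₂ − y·ũ₃), and (1+z)²·ũ₃ belongs to Q_k^{k,k,k}. -/
open MeasureTheory

noncomputable section

/-- The infinite pyramid K∞ = [0,1] × [0,1] × [0,∞). -/
def Kinf : Set (ℝ × ℝ × ℝ) :=
  {p | 0 ≤ p.1 ∧ p.1 ≤ 1 ∧ 0 ≤ p.2.1 ∧ p.2.1 ≤ 1 ∧ 0 ≤ p.2.2}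

/-- The k-weighted tensor product polynomial space Q_k^{l,m,n}: the span of
(x,y,z) ↦ x^a y^b z^c / (1+z)^k for 0 ≤ a ≤ l, 0 ≤ b ≤ m, 0 ≤ c ≤ n. -/
def Qspace (k : ℕ) (l m n : ℤ) : Submodule ℝ ((ℝ × ℝ × ℝ) → ℝ) :=
  Submodule.span ℝ {f | ∃ a b c : ℕ, (a : ℤ) ≤ l ∧ (b : ℤ) ≤ m ∧ (c : ℤ) ≤ n ∧
    f = fun p => p.1 ^ a * p.2.1 ^ b * p.2.2 ^ c / (1 + p.2.2) ^ k}

/-- Membership in the H(div)-underlying space U^{(2)}_k: ũ = p̃ +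
(z^{k−1}/(1+z)^{k+2})·(0, 2s, (1+z)·∂s/∂y) + (z^{k−1}/(1+z)^{k+2})·(2t, 0, (1+z)·∂t/∂x)
with p̃ ∈ Q_{k+2}^{k,k−1,k−2} × Q_{k+2}^{k−1,k,k−2} × Q_{k+2}^{k−1,k−1,k−1},
s of degree ≤ k−1 in x and ≤ k in y, and t of degree ≤ k in x and ≤ k−1 in y. -/
def U2mem (k : ℕ) (u1 u2 u3 : (ℝ × ℝ × ℝ) → ℝ) : Prop :=
  ∃ p1 ∈ Qspace (k + 2) k ((k : ℤ) - 1) ((k : ℤ) - 2),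
  ∃ p2 ∈ Qspace (k + 2) ((k : ℤ) - 1) k ((k : ℤ) - 2),
  ∃ p3 ∈ Qspace (k + 2) ((k : ℤ) - 1) ((k : ℤ) - 1) ((k : ℤ) - 1),
  ∃ s : MvPolynomial (Fin 2) ℝ, ∃ t : MvPolynomial (Fin 2) ℝ,
    s.degreeOf 0 ≤ k - 1 ∧ s.degreeOf 1 ≤ k ∧
    t.degreeOf 0 ≤ k ∧ t.degreeOf 1 ≤ k - 1 ∧
    (u1 = fun p => p1 p + p.2.2 ^ (k - 1) / (1 + p.2.2) ^ (k + 2) *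
        (2 * MvPolynomial.eval ![p.1, p.2.1] t)) ∧
    (u2 = fun p => p2 p + p.2.2 ^ (k - 1) / (1 + p.2.2) ^ (k + 2) *
        (2 * MvPolynomial.eval ![p.1, p.2.1] s)) ∧
    (u3 = fun p => p3 p + p.2.2 ^ (k - 1) / (1 + p.2.2) ^ (k + 2) *
        ((1 + p.2.2) * (MvPolynomial.eval ![p.1, p.2.1] (MvPolynomial.pderiv 1 s) +
          MvPolynomial.eval ![p.1, p.2.1] (MvPolynomial.pderiv 0 t))))

open MvPolynomial

lemma pderiv_support_sub {i : Fin 2} {f : MvPolynomial (Fin 2) ℝ} {m : Fin 2 →₀ ℕ}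
    (hm : m ∈ (pderiv i f).support) :
    ∃ d ∈ f.support, d i ≠ 0 ∧ m = d - Finsupp.single i 1 := by
  classical
  have hf : pderiv i f = ∑ d ∈ f.support, pderiv i (monomial d (coeff d f)) := by
    conv_lhs => rw [f.as_sum, map_sum]
  rw [hf] at hm
  obtain ⟨d, hd, hm'⟩ := Finset.mem_biUnion.mp (support_sum hm)
  rw [pderiv_monomial] at hm'
  rw [support_monomial] at hm'
  by_cases h : coeff d f * (d i : ℝ) = 0
  · simp [h] at hm'
  · rw [if_neg h] at hm'
    have hdi : d i ≠ 0 := by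
      intro h0
      simp [h0] at h
    exact ⟨d, hd, hdi, Finset.mem_singleton.mp hm'⟩

lemma degreeOf_pderiv_le' (i j : Fin 2) (f : MvPolynomial (Fin 2) ℝ) :
    degreeOf j (pderiv i f) ≤ degreeOf j f := by
  rw [degreeOf_le_iff]
  intro m hm
  obtain ⟨d, hd, hdi, rfl⟩ := pderiv_support_sub hm
  have := monomial_le_degreeOf j hd
  have h2 : ((d - Finsupp.single i 1 : Fin 2 →₀ ℕ)) j = d j - (Finsupp.single i 1) j :=
    Finsupp.tsub_apply _ _ _
  omega

lemma degreeOf_pderiv_self_le (i : Fin 2) (f : MvPolynomial (Fin 2) ℝ) :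
    degreeOf i (pderiv i f) ≤ degreeOf i f - 1 := by
  rw [degreeOf_le_iff]
  intro m hm
  obtain ⟨d, hd, hdi, rfl⟩ := pderiv_support_sub hm
  have := monomial_le_degreeOf i hd
  have h2 : ((d - Finsupp.single i 1 : Fin 2 →₀ ℕ)) i = d i - (Finsupp.single i 1) i :=
    Finsupp.tsub_apply _ _ _
  have h3 : (Finsupp.single i (1:ℕ)) i = 1 := Finsupp.single_eq_same
  omega

lemma Qspace_mono {k : ℕ} {l m n l' m' n' : ℤ} (hl : l ≤ l') (hm : m ≤ m') (hn : n ≤ n') :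
    Qspace k l m n ≤ Qspace k l' m' n' := by
  apply Submodule.span_mono
  rintro f ⟨a, b, c, ha, hb, hc, hf⟩
  exact ⟨a, b, c, ha.trans hl, hb.trans hm, hc.trans hn, hf⟩

lemma mul_mem_aux {k K : ℕ} {l m n l' m' n' : ℤ} (g : (ℝ × ℝ × ℝ) → ℝ)
    (H : ∀ a b c : ℕ, (a : ℤ) ≤ l → (b : ℤ) ≤ m → (c : ℤ) ≤ n →
      (fun p : ℝ × ℝ × ℝ => g p * (p.1 ^ a * p.2.1 ^ b * p.2.2 ^ c / (1 + p.2.2) ^ k))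
        ∈ Qspace K l' m' n')
    {f : (ℝ × ℝ × ℝ) → ℝ} (hf : f ∈ Qspace k l m n) :
    (fun p => g p * f p) ∈ Qspace K l' m' n' := by
  induction hf using Submodule.span_induction with
  | mem f hf =>
    obtain ⟨a, b, c, ha, hb, hc, rfl⟩ := hf
    exact H a b c ha hb hc
  | zero =>
    have e : (fun p : ℝ × ℝ × ℝ => g p * (0 : (ℝ × ℝ × ℝ) → ℝ) p) = 0 := by
      funext p; simp
    rw [e]; exact zero_mem _
  | add u v hu hv ihu ihv =>
    have e : (fun p : ℝ × ℝ × ℝ => g p * (u + v) p)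
        = (fun p => g p * u p) + fun p => g p * v p := by
      funext p; simp [mul_add]
    rw [e]; exact add_mem ihu ihv
  | smul r u hu ihu =>
    have e : (fun p : ℝ × ℝ × ℝ => g p * (r • u) p) = r • fun p => g p * u p := by
      funext p; simp [Pi.smul_apply]; ring
    rw [e]; exact Submodule.smul_mem _ _ ihu

lemma mulx_mem {k : ℕ} {l m n : ℤ} {f : (ℝ × ℝ × ℝ) → ℝ} (hf : f ∈ Qspace k l m n) :
    (fun p => p.1 * f p) ∈ Qspace k (l + 1) m n := by
  refine mul_mem_aux _ (fun a b c ha hb hc => Submodule.subset_span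
    ⟨a + 1, b, c, by push_cast; omega, hb, hc, funext fun p => by ring⟩) hf

lemma muly_mem {k : ℕ} {l m n : ℤ} {f : (ℝ × ℝ × ℝ) → ℝ} (hf : f ∈ Qspace k l m n) :
    (fun p => p.2.1 * f p) ∈ Qspace k l (m + 1) n := by
  refine mul_mem_aux _ (fun a b c ha hb hc => Submodule.subset_span
    ⟨a, b + 1, c, ha, by push_cast; omega, hc, funext fun p => by ring⟩) hf

lemma mul2_mem {k : ℕ} (hk : k ≠ 0) {l m n : ℤ} {f : (ℝ × ℝ × ℝ) → ℝ}
    (hf : f ∈ Qspace (k + 2) l m n) :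
    (fun p => (1 + p.2.2) ^ 2 * f p) ∈ Qspace k l m n := by
  refine mul_mem_aux _ (fun a b c ha hb hc => ?_) hf
  refine Submodule.subset_span ⟨a, b, c, ha, hb, hc, funext fun p => ?_⟩
  rcases eq_or_ne (1 + p.2.2) 0 with h | h
  · rw [h, zero_pow (by omega : k + 2 ≠ 0), zero_pow hk]
    simp
  · field_simp
    ring

lemma mul3_mem {k : ℕ} (hk : k ≠ 0) {l m n : ℤ} {f : (ℝ × ℝ × ℝ) → ℝ}
    (hf : f ∈ Qspace (k + 2) l m n) :
    (fun p => (1 + p.2.2) ^ 3 * f p) ∈ Qspace k l m (n + 1) := by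
  refine mul_mem_aux _ (fun a b c ha hb hc => ?_) hf
  have e : (fun p : ℝ × ℝ × ℝ =>
      (1 + p.2.2) ^ 3 * (p.1 ^ a * p.2.1 ^ b * p.2.2 ^ c / (1 + p.2.2) ^ (k + 2)))
      = (fun p : ℝ × ℝ × ℝ => p.1 ^ a * p.2.1 ^ b * p.2.2 ^ c / (1 + p.2.2) ^ k)
        + fun p : ℝ × ℝ × ℝ => p.1 ^ a * p.2.1 ^ b * p.2.2 ^ (c + 1) / (1 + p.2.2) ^ k := by
    funext p
    simp only [Pi.add_apply]
    rcases eq_or_ne (1 + p.2.2) 0 with h | h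
    · rw [h, zero_pow (by omega : k + 2 ≠ 0), zero_pow hk]
      simp
    · field_simp
      ring
  rw [e]
  exact add_mem (Submodule.subset_span ⟨a, b, c, ha, hb, by omega, rfl⟩)
    (Submodule.subset_span ⟨a, b, c + 1, ha, hb, by push_cast; omega, rfl⟩)

lemma poly_mul_mem (k : ℕ) {l m n : ℤ} (q : MvPolynomial (Fin 2) ℝ) (c : ℕ)
    (h0 : (q.degreeOf 0 : ℤ) ≤ l) (h1 : (q.degreeOf 1 : ℤ) ≤ m) (hc : (c : ℤ) ≤ n) :
    (fun p : ℝ × ℝ × ℝ => MvPolynomial.eval ![p.1, p.2.1] q * (p.2.2 ^ c / (1 + p.2.2) ^ k))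
      ∈ Qspace k l m n := by
  have key : (fun p : ℝ × ℝ × ℝ =>
        MvPolynomial.eval ![p.1, p.2.1] q * (p.2.2 ^ c / (1 + p.2.2) ^ k))
      = ∑ d ∈ q.support, MvPolynomial.coeff d q •
          fun p : ℝ × ℝ × ℝ => p.1 ^ d 0 * p.2.1 ^ d 1 * p.2.2 ^ c / (1 + p.2.2) ^ k := by
    funext p
    rw [Finset.sum_apply, MvPolynomial.eval_eq', Finset.sum_mul]
    refine Finset.sum_congr rfl fun d _ => ?_
    simp only [Pi.smul_apply, smul_eq_mul, Fin.prod_univ_two, Matrix.cons_val_zero,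
      Matrix.cons_val_one, Matrix.head_cons]
    ring
  rw [key]
  refine Submodule.sum_mem _ fun d hd => Submodule.smul_mem _ _ (Submodule.subset_span
    ⟨d 0, d 1, c, ?_, ?_, hc, rfl⟩)
  · exact le_trans (Int.ofNat_le.mpr (monomial_le_degreeOf 0 hd)) h0
  · exact le_trans (Int.ofNat_le.mpr (monomial_le_degreeOf 1 hd)) h1

/-- for ũ ∈ U^{(2)}_k, the functions (1+z)²·((1+z)·ũ₁ − x·ũ₃),
(1+z)²·((1+z)·ũ₂ − y·ũ₃) and (1+z)²·ũ₃ all belong to Q_k^{k,k,k}. -/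
theorem stmt_8 (k : ℕ) (hk : 1 ≤ k) (u1 u2 u3 : (ℝ × ℝ × ℝ) → ℝ)
    (hu : U2mem k u1 u2 u3) :
    (fun p : ℝ × ℝ × ℝ => (1 + p.2.2) ^ 2 * ((1 + p.2.2) * u1 p - p.1 * u3 p)) ∈
      Qspace k k k k ∧
    (fun p : ℝ × ℝ × ℝ => (1 + p.2.2) ^ 2 * ((1 + p.2.2) * u2 p - p.2.1 * u3 p)) ∈
      Qspace k k k k ∧
    (fun p : ℝ × ℝ × ℝ => (1 + p.2.2) ^ 2 * u3 p) ∈ Qspace k k k k := by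
  obtain ⟨p1, hp1, p2, hp2, p3, hp3, s, t, hs0, hs1, ht0, ht1, rfl, rfl, rfl⟩ := hu
  obtain ⟨j, rfl⟩ : ∃ j, k = j + 1 := ⟨k - 1, by omega⟩
  clear hk
  set Q : MvPolynomial (Fin 2) ℝ := pderiv 1 s + pderiv 0 t with hQdef
  -- degree bounds
  have hQ0 : Q.degreeOf 0 ≤ j := by
    refine (degreeOf_add_le 0 _ _).trans (max_le ?_ ?_)
    · exact (degreeOf_pderiv_le' 1 0 s).trans (by omega)
    · exact (degreeOf_pderiv_self_le 0 t).trans (by omega)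
  have hQ1 : Q.degreeOf 1 ≤ j := by
    refine (degreeOf_add_le 1 _ _).trans (max_le ?_ ?_)
    · exact (degreeOf_pderiv_self_le 1 s).trans (by omega)
    · exact (degreeOf_pderiv_le' 0 1 t).trans (by omega)
  set t2 : MvPolynomial (Fin 2) ℝ := C 2 * t with ht2def
  set s2 : MvPolynomial (Fin 2) ℝ := C 2 * s with hs2def
  set QX : MvPolynomial (Fin 2) ℝ := X 0 * Q with hQXdef
  set QY : MvPolynomial (Fin 2) ℝ := X 1 * Q with hQYdef
  have ht2_0 : t2.degreeOf 0 ≤ j + 1 := by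
    have := degreeOf_mul_le 0 (C (2:ℝ)) t
    simp only [degreeOf_C, zero_add] at this
    rw [← ht2def] at this
    omega
  have ht2_1 : t2.degreeOf 1 ≤ j + 1 := by
    have := degreeOf_mul_le 1 (C (2:ℝ)) t
    simp only [degreeOf_C, zero_add] at this
    rw [← ht2def] at this
    omega
  have hs2_0 : s2.degreeOf 0 ≤ j + 1 := by
    have := degreeOf_mul_le 0 (C (2:ℝ)) s
    simp only [degreeOf_C, zero_add] at this
    rw [← hs2def] at this
    omega
  have hs2_1 : s2.degreeOf 1 ≤ j + 1 := by
    have := degreeOf_mul_le 1 (C (2:ℝ)) s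
    simp only [degreeOf_C, zero_add] at this
    rw [← hs2def] at this
    omega
  have hX00 : degreeOf 0 (X 0 : MvPolynomial (Fin 2) ℝ) = 1 := by simp [degreeOf_X]
  have hX01 : degreeOf 1 (X 0 : MvPolynomial (Fin 2) ℝ) = 0 := by simp [degreeOf_X]
  have hX10 : degreeOf 0 (X 1 : MvPolynomial (Fin 2) ℝ) = 0 := by simp [degreeOf_X]
  have hX11 : degreeOf 1 (X 1 : MvPolynomial (Fin 2) ℝ) = 1 := by simp [degreeOf_X]
  have hQX0 : QX.degreeOf 0 ≤ j + 1 := by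
    have := degreeOf_mul_le 0 (X 0) Q
    rw [hX00, ← hQXdef] at this
    omega
  have hQX1 : QX.degreeOf 1 ≤ j + 1 := by
    have := degreeOf_mul_le 1 (X 0) Q
    rw [hX01, ← hQXdef] at this
    omega
  have hQY0 : QY.degreeOf 0 ≤ j + 1 := by
    have := degreeOf_mul_le 0 (X 1) Q
    rw [hX10, ← hQYdef] at this
    omega
  have hQY1 : QY.degreeOf 1 ≤ j + 1 := by
    have := degreeOf_mul_le 1 (X 1) Q
    rw [hX11, ← hQYdef] at this
    omega
  have cj : ((j : ℤ)) ≤ ((j + 1 : ℕ) : ℤ) := by omega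
  have cj1 : (((j + 1 : ℕ) : ℤ)) ≤ ((j + 1 : ℕ) : ℤ) := le_rfl
  refine ⟨?_, ?_, ?_⟩
  · -- first component
    have hmem : ((fun p : ℝ × ℝ × ℝ => (1 + p.2.2) ^ 3 * p1 p)
        + (fun p : ℝ × ℝ × ℝ => MvPolynomial.eval ![p.1, p.2.1] t2 *
            (p.2.2 ^ j / (1 + p.2.2) ^ (j + 1)))
        + (fun p : ℝ × ℝ × ℝ => MvPolynomial.eval ![p.1, p.2.1] t2 *
            (p.2.2 ^ (j + 1) / (1 + p.2.2) ^ (j + 1)))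
        - ((fun p : ℝ × ℝ × ℝ => p.1 * ((1 + p.2.2) ^ 2 * p3 p))
          + (fun p : ℝ × ℝ × ℝ => MvPolynomial.eval ![p.1, p.2.1] QX *
              (p.2.2 ^ j / (1 + p.2.2) ^ (j + 1)))
          + (fun p : ℝ × ℝ × ℝ => MvPolynomial.eval ![p.1, p.2.1] QX *
              (p.2.2 ^ (j + 1) / (1 + p.2.2) ^ (j + 1)))))
        ∈ Qspace (j + 1) ((j + 1 : ℕ) : ℤ) ((j + 1 : ℕ) : ℤ) ((j + 1 : ℕ) : ℤ) := by
      refine sub_mem (add_mem (add_mem ?_ ?_) ?_) (add_mem (add_mem ?_ ?_) ?_)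
      · exact Qspace_mono (by omega) (by omega) (by omega)
          (mul3_mem (by omega) hp1)
      · exact poly_mul_mem _ t2 j (Nat.cast_le.mpr ht2_0) (Nat.cast_le.mpr ht2_1) cj
      · exact poly_mul_mem _ t2 (j + 1) (Nat.cast_le.mpr ht2_0) (Nat.cast_le.mpr ht2_1) cj1
      · exact Qspace_mono (by omega) (by omega) (by omega)
          (mulx_mem (mul2_mem (by omega) hp3))
      · exact poly_mul_mem _ QX j (Nat.cast_le.mpr hQX0) (Nat.cast_le.mpr hQX1) cj
      · exact poly_mul_mem _ QX (j + 1) (Nat.cast_le.mpr hQX0) (Nat.cast_le.mpr hQX1) cj1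
    convert hmem using 1
    funext p
    simp only [Pi.add_apply, Pi.sub_apply, ht2def, hQXdef, hQdef, map_add, map_mul,
      eval_C, eval_X, Matrix.cons_val_zero, Matrix.cons_val_one, Matrix.head_cons,
      Nat.add_sub_cancel]
    rcases eq_or_ne (1 + p.2.2) 0 with h | h
    · rw [h, zero_pow (by omega : j + 1 + 2 ≠ 0), zero_pow (by omega : j + 1 ≠ 0)]
      simp
    · field_simp
      ring
  · -- second component
    have hmem : ((fun p : ℝ × ℝ × ℝ => (1 + p.2.2) ^ 3 * p2 p)
        + (fun p : ℝ × ℝ × ℝ => MvPolynomial.eval ![p.1, p.2.1] s2 *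
            (p.2.2 ^ j / (1 + p.2.2) ^ (j + 1)))
        + (fun p : ℝ × ℝ × ℝ => MvPolynomial.eval ![p.1, p.2.1] s2 *
            (p.2.2 ^ (j + 1) / (1 + p.2.2) ^ (j + 1)))
        - ((fun p : ℝ × ℝ × ℝ => p.2.1 * ((1 + p.2.2) ^ 2 * p3 p))
          + (fun p : ℝ × ℝ × ℝ => MvPolynomial.eval ![p.1, p.2.1] QY *
              (p.2.2 ^ j / (1 + p.2.2) ^ (j + 1)))
          + (fun p : ℝ × ℝ × ℝ => MvPolynomial.eval ![p.1, p.2.1] QY *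
              (p.2.2 ^ (j + 1) / (1 + p.2.2) ^ (j + 1)))))
        ∈ Qspace (j + 1) ((j + 1 : ℕ) : ℤ) ((j + 1 : ℕ) : ℤ) ((j + 1 : ℕ) : ℤ) := by
      refine sub_mem (add_mem (add_mem ?_ ?_) ?_) (add_mem (add_mem ?_ ?_) ?_)
      · exact Qspace_mono (by omega) (by omega) (by omega)
          (mul3_mem (by omega) hp2)
      · exact poly_mul_mem _ s2 j (Nat.cast_le.mpr hs2_0) (Nat.cast_le.mpr hs2_1) cj
      · exact poly_mul_mem _ s2 (j + 1) (Nat.cast_le.mpr hs2_0) (Nat.cast_le.mpr hs2_1) cj1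
      · exact Qspace_mono (by omega) (by omega) (by omega)
          (muly_mem (mul2_mem (by omega) hp3))
      · exact poly_mul_mem _ QY j (Nat.cast_le.mpr hQY0) (Nat.cast_le.mpr hQY1) cj
      · exact poly_mul_mem _ QY (j + 1) (Nat.cast_le.mpr hQY0) (Nat.cast_le.mpr hQY1) cj1
    convert hmem using 1
    funext p
    simp only [Pi.add_apply, Pi.sub_apply, hs2def, hQYdef, hQdef, map_add, map_mul,
      eval_C, eval_X, Matrix.cons_val_zero, Matrix.cons_val_one, Matrix.head_cons,
      Nat.add_sub_cancel]
    rcases eq_or_ne (1 + p.2.2) 0 with h | h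
    · rw [h, zero_pow (by omega : j + 1 + 2 ≠ 0), zero_pow (by omega : j + 1 ≠ 0)]
      simp
    · field_simp
      ring
  · -- third component
    have hmem : ((fun p : ℝ × ℝ × ℝ => (1 + p.2.2) ^ 2 * p3 p)
        + (fun p : ℝ × ℝ × ℝ => MvPolynomial.eval ![p.1, p.2.1] Q *
            (p.2.2 ^ j / (1 + p.2.2) ^ (j + 1)))
        + (fun p : ℝ × ℝ × ℝ => MvPolynomial.eval ![p.1, p.2.1] Q *
            (p.2.2 ^ (j + 1) / (1 + p.2.2) ^ (j + 1))))
        ∈ Qspace (j + 1) ((j + 1 : ℕ) : ℤ) ((j + 1 : ℕ) : ℤ) ((j + 1 : ℕ) : ℤ) := by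
      refine add_mem (add_mem ?_ ?_) ?_
      · exact Qspace_mono (by omega) (by omega) (by omega) (mul2_mem (by omega) hp3)
      · exact poly_mul_mem _ Q j (Nat.cast_le.mpr (hQ0.trans (by omega)))
          (Nat.cast_le.mpr (hQ1.trans (by omega))) cj
      · exact poly_mul_mem _ Q (j + 1) (Nat.cast_le.mpr (hQ0.trans (by omega)))
          (Nat.cast_le.mpr (hQ1.trans (by omega))) cj1
    convert hmem using 1
    funext p
    simp only [Pi.add_apply, hQdef, map_add, Nat.add_sub_cancel]
    rcases eq_or_ne (1 + p.2.2) 0 with h | h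
    · rw [h, zero_pow (by omega : j + 1 + 2 ≠ 0), zero_pow (by omega : j + 1 ≠ 0)]
      simp
    · field_simp
      ring
end
end

section
/- Let k ≥ 1 be an integer. Suppose u₁ ∈ Q_{k+1}^{[k−1,k]} and u₂ ∈ Q_{k+1}^{[k,k−1]} (real-valued functions on the open infinite pyramid U∞) are such that the curl of the vector field (u₁, u₂, 0) vanishes identically on U∞, i.e. ∂u₂/∂z = 0, ∂u₁/∂z = 0, and ∂u₂/∂x − ∂u₁/∂y = 0 on U∞. Then u₁ = 0 and u₂ = 0. (The curl is injective on Q_{k+1}^{[k−1,k]} × Q_{k+1}^{[k,k−1]} × {0}.) -/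
open MeasureTheory

noncomputable section

/-- The open infinite pyramid U∞ = (0,1) × (0,1) × (0,∞). -/
def Uinf : Set (ℝ × ℝ × ℝ) :=
  {p | 0 < p.1 ∧ p.1 < 1 ∧ 0 < p.2.1 ∧ p.2.1 < 1 ∧ 0 < p.2.2}

/-- Partial derivative with respect to the first coordinate x. -/
def Dx (u : (ℝ × ℝ × ℝ) → ℝ) : (ℝ × ℝ × ℝ) → ℝ :=
  fun p => deriv (fun t => u (t, p.2.1, p.2.2)) p.1

/-- Partial derivative with respect to the second coordinate y. -/
def Dy (u : (ℝ × ℝ × ℝ) → ℝ) : (ℝ × ℝ × ℝ) → ℝ :=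
  fun p => deriv (fun t => u (p.1, t, p.2.2)) p.2.1

/-- Partial derivative with respect to the third coordinate z. -/
def Dz (u : (ℝ × ℝ × ℝ) → ℝ) : (ℝ × ℝ × ℝ) → ℝ :=
  fun p => deriv (fun t => u (p.1, p.2.1, t)) p.2.2

/-- The space Q_k^{[l,m]}: the span of (x,y,z) ↦ x^a y^b/(1+z)^c for
0 ≤ c ≤ k, 0 ≤ a ≤ c+l−k, 0 ≤ b ≤ c+m−k. -/
def QB (k : ℕ) (l m : ℤ) : Submodule ℝ ((ℝ × ℝ × ℝ) → ℝ) :=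
  Submodule.span ℝ {f | ∃ a b c : ℕ, c ≤ k ∧ (a : ℤ) ≤ c + l - k ∧ (b : ℤ) ≤ c + m - k ∧
    f = fun p => p.1 ^ a * p.2.1 ^ b / (1 + p.2.2) ^ c}

/-!
If `l < k`, the bound `0 ≤ a ≤ c + l - k` forces `c ≥ 1` in every generator of `Q_k^{[l,m]}`,
so every element of `Q_k^{[l,m]}` tends to `0` as `z → ∞` along each vertical line. A function
with `∂u/∂z = 0` on the pyramid is constant on these vertical half-lines, hence vanishes.
-/

open Filter Set Topology

theorem eqOn_zero_of_deriv_eq_zero_of_tendsto_atTop {E : Type*} [NormedAddCommGroup E]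
    [NormedSpace ℝ E] {g : ℝ → E} {a : ℝ} (hg : DifferentiableOn ℝ g (Ioi a))
    (hg' : (Ioi a).EqOn (deriv g) 0) (hlim : Tendsto g atTop (𝓝 0)) : (Ioi a).EqOn g 0 := by
  obtain ⟨c, hc⟩ := isOpen_Ioi.exists_is_const_of_deriv_eq_zero isPreconnected_Ioi hg hg'
  have hlim_c : Tendsto g atTop (𝓝 c) :=
    tendsto_const_nhds.congr' <| (eventually_gt_atTop a).mono fun t ht => (hc t ht).symm
  intro t ht
  rw [hc t ht, tendsto_nhds_unique hlim_c hlim, Pi.zero_apply]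

def zDecaying : Submodule ℝ ((ℝ × ℝ × ℝ) → ℝ) where
  carrier := {u | ∀ x y, DifferentiableOn ℝ (fun z => u (x, y, z)) (Ioi 0) ∧
    Tendsto (fun z => u (x, y, z)) atTop (𝓝 0)}
  add_mem' hu hv x y := ⟨(hu x y).1.add (hv x y).1, by simpa using (hu x y).2.add (hv x y).2⟩
  zero_mem' _ _ := ⟨differentiableOn_const 0, tendsto_const_nhds⟩
  smul_mem' r _ hu x y := ⟨(hu x y).1.const_smul r, by simpa using (hu x y).2.const_mul r⟩

theorem div_one_add_pow_mem_zDecaying (a b : ℕ) {c : ℕ} (hc : c ≠ 0) :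
    (fun p : ℝ × ℝ × ℝ => p.1 ^ a * p.2.1 ^ b / (1 + p.2.2) ^ c) ∈ zDecaying := by
  intro x y
  constructor
  · refine DifferentiableOn.div (by fun_prop) (by fun_prop) fun z hz => pow_ne_zero c ?_
    linarith [mem_Ioi.mp hz]
  · have hden : Tendsto (fun z : ℝ => (1 + z) ^ c) atTop atTop :=
      (tendsto_pow_atTop hc).comp (tendsto_atTop_add_const_left _ 1 tendsto_id)
    simpa [div_eq_mul_inv] using hden.inv_tendsto_atTop.const_mul (x ^ a * y ^ b)

theorem QB_le_zDecaying {k : ℕ} {l m : ℤ} (h : l < k ∨ m < k) : QB k l m ≤ zDecaying := by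
  refine Submodule.span_le.mpr ?_
  rintro _ ⟨a, b, c, -, ha, hb, rfl⟩
  exact div_one_add_pow_mem_zDecaying a b (by omega)

theorem eqOn_zero_of_mem_zDecaying_of_Dz_eq_zero {u : (ℝ × ℝ × ℝ) → ℝ} (hu : u ∈ zDecaying)
    (hdz : Uinf.EqOn (Dz u) 0) : Uinf.EqOn u 0 := by
  rintro ⟨x, y, z⟩ ⟨hx0, hx1, hy0, hy1, hz⟩
  exact eqOn_zero_of_deriv_eq_zero_of_tendsto_atTop (hu x y).1
    (fun t ht => hdz (show (x, y, t) ∈ Uinf from ⟨hx0, hx1, hy0, hy1, ht⟩)) (hu x y).2 hz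

theorem stmt_15_general (k : ℕ) (u1 u2 : (ℝ × ℝ × ℝ) → ℝ)
    (hu1 : u1 ∈ QB (k + 1) ((k : ℤ) - 1) k) (hu2 : u2 ∈ QB (k + 1) k ((k : ℤ) - 1))
    (hc1 : ∀ p ∈ Uinf, Dz u2 p = 0)
    (hc2 : ∀ p ∈ Uinf, Dz u1 p = 0) :
    (∀ p ∈ Uinf, u1 p = 0) ∧ (∀ p ∈ Uinf, u2 p = 0) :=
  ⟨eqOn_zero_of_mem_zDecaying_of_Dz_eq_zero (QB_le_zDecaying (Or.inl (by omega)) hu1) hc2,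
    eqOn_zero_of_mem_zDecaying_of_Dz_eq_zero (QB_le_zDecaying (Or.inr (by omega)) hu2) hc1⟩

/-- the curl is injective on Q_{k+1}^{[k−1,k]} × Q_{k+1}^{[k,k−1]} × {0}:
if the curl of (u₁, u₂, 0) vanishes on U∞ then u₁ = u₂ = 0 on U∞. -/
theorem stmt_15 (k : ℕ) (hk : 1 ≤ k) (u1 u2 : (ℝ × ℝ × ℝ) → ℝ)
    (hu1 : u1 ∈ QB (k + 1) ((k : ℤ) - 1) k) (hu2 : u2 ∈ QB (k + 1) k ((k : ℤ) - 1))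
    (hc1 : ∀ p ∈ Uinf, Dz u2 p = 0)
    (hc2 : ∀ p ∈ Uinf, Dz u1 p = 0)
    (hc3 : ∀ p ∈ Uinf, Dx u2 p - Dy u1 p = 0) :
    (∀ p ∈ Uinf, u1 p = 0) ∧ (∀ p ∈ Uinf, u2 p = 0) :=
  stmt_15_general k u1 u2 hu1 hu2 hc1 hc2
end
end
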